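/- In any algebra satisfying (B1)–(B10), one has ∼̇∼̇¬x = ¬x and ¬¬∼̇x = ∼̇x for all x. -/

import Mathlib

/-!
Complements are unique in a distributive lattice. By (B2) and (B3), `s (n x)` is a complement of
`n x`; by (B8) and (B2), `s y` is a complement of `s (s y)` as soon as `s ⊤ = ⊥`. Hence
`s (s (n x)) = n x`. Dually, (B1) and (B4) make `n (s x)` a complement of `s x`, and (B7) with (B1)
makes `n y` a complement of `n (n y)` as soon as `n ⊥ = ⊤`, so `n (n (s x)) = s x`.
-/

section

variable {A : Type*} [DistribLattice A] [BoundedOrder A] {n s : A → A}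

theorem s_top_eq_bot
    (B3 : ∀ x : A, n x ⊓ s (n x) = ⊥)
    (B5 : ∀ x y : A, s (x ⊓ y) = s x ⊔ s y)
    (B9 : ∀ x y : A, (x ⊔ y) ⊓ s (x ⊔ y) ≤ x ⊔ n x) :
    s ⊤ = ⊥ := by
  have s_top_le (y : A) : s ⊤ ≤ s y := le_sup_left.trans_eq (by rw [← B5, top_inf_eq])
  have s_top_le_n_bot : s ⊤ ≤ n ⊥ := by simpa using B9 ⊥ ⊤
  rw [← le_bot_iff, ← B3 ⊥]
  exact le_inf s_top_le_n_bot (s_top_le _)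

theorem n_bot_eq_top (B4 : ∀ x : A, s x ⊔ n (s x) = ⊤) (hs : s ⊤ = ⊥) : n ⊥ = ⊤ := by
  simpa [hs] using B4 ⊤

theorem isCompl_s_ss
    (B2 : ∀ x : A, x ⊔ s x = ⊤)
    (B8 : ∀ x y : A, s (x ⊔ s y) = s x ⊓ s (s y))
    (hs : s ⊤ = ⊥) (y : A) :
    IsCompl (s y) (s (s y)) :=
  .of_eq (by rw [← B8, B2, hs]) (B2 _)

theorem isCompl_n_nn
    (B1 : ∀ x : A, x ⊓ n x = ⊥)
    (B7 : ∀ x y : A, n (x ⊓ n y) = n x ⊔ n (n y))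
    (hn : n ⊥ = ⊤) (y : A) :
    IsCompl (n y) (n (n y)) :=
  .of_eq (B1 _) (by rw [← B7, B1, hn])

end

theorem stmt_general {A : Type*} [DistribLattice A] [BoundedOrder A]
    (n s : A → A)
    (B1 : ∀ x : A, x ⊓ n x = ⊥)
    (B2 : ∀ x : A, x ⊔ s x = ⊤)
    (B3 : ∀ x : A, n x ⊓ s (n x) = ⊥)
    (B4 : ∀ x : A, s x ⊔ n (s x) = ⊤)
    (B5 : ∀ x y : A, s (x ⊓ y) = s x ⊔ s y)
    (B7 : ∀ x y : A, n (x ⊓ n y) = n x ⊔ n (n y))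
    (B8 : ∀ x y : A, s (x ⊔ s y) = s x ⊓ s (s y))
    (B9 : ∀ x y : A, (x ⊔ y) ⊓ s (x ⊔ y) ≤ x ⊔ n x) :
    ∀ x : A, s (s (n x)) = n x ∧ n (n (s x)) = s x := by
  intro x
  have hs : s ⊤ = ⊥ := s_top_eq_bot B3 B5 B9
  have hn : n ⊥ = ⊤ := n_bot_eq_top B4 hs
  have compl_n : IsCompl (s (n x)) (n x) := (IsCompl.of_eq (B3 x) (B2 _)).symm
  have compl_s : IsCompl (n (s x)) (s x) := (IsCompl.of_eq (B1 _) (B4 x)).symm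
  exact ⟨(isCompl_s_ss B2 B8 hs _).right_unique compl_n,
    (isCompl_n_nn B1 B7 hn _).right_unique compl_s⟩

theorem stmt {A : Type*} [DistribLattice A] [BoundedOrder A]
    (n s : A → A)
    (B1 : ∀ x : A, x ⊓ n x = ⊥)
    (B2 : ∀ x : A, x ⊔ s x = ⊤)
    (B3 : ∀ x : A, n x ⊓ s (n x) = ⊥)
    (B4 : ∀ x : A, s x ⊔ n (s x) = ⊤)
    (B5 : ∀ x y : A, s (x ⊓ y) = s x ⊔ s y)
    (B6 : ∀ x y : A, n (x ⊔ y) = n x ⊓ n y)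
    (B7 : ∀ x y : A, n (x ⊓ n y) = n x ⊔ n (n y))
    (B8 : ∀ x y : A, s (x ⊔ s y) = s x ⊓ s (s y))
    (B9 : ∀ x y : A, (x ⊔ y) ⊓ s (x ⊔ y) ≤ x ⊔ n x)
    (B10 : ∀ x y : A, x ⊓ s x ⊓ y ⊓ s y ≤ s (x ⊔ y)) :
    ∀ x : A, s (s (n x)) = n x ∧ n (n (s x)) = s x :=
  stmt_general n s B1 B2 B3 B4 B5 B7 B8 B9
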